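/- arXiv:2504.01283 — 2 statements merged into one kernel-verified Lean document; each statement's English description precedes it below -/
import Mathlib

section
/- Let μ be a nondegenerate probability measure with finite entropy on a countable subgroup G of Homeo₊(S¹) acting minimally and proximally on S¹, let (S¹, ν) be the associated μ-boundary, let a ∈ G∖{e_G} be such that both supp(a) and S¹∖supp(a) have nonempty interior, and let J ⊊ S¹ be the smallest closed interval containing supp(a). Let p > 0, and for each n ≥ 1 let Ξₙ ⊆ S¹ with ν(Ξₙ) ≥ p, and for ν-almost every ξ ∈ Ξₙ let A_{n,ξ} be a set of collections of length n. If every A_{n,ξ} consists of ξ-good collections, then: every T^{a,e_G}(q) with q ∈ A_{n,ξ} is satisfactory; cylinders coming from distinct collections in A_{n,ξ} are disjoint; and for each q = (x, i₁,…,i_k) ∈ A_{n,ξ} and every (y₁,…,yₙ) ∈ T^{a,e_G}(q) one has y_{i_r−1}⁻¹(ξ) ∉ J for all 1 ≤ r ≤ k. -/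
open MeasureTheory Filter Topology Set

noncomputable section

/-! ## The circle `ℝ/ℤ` and group actions on it -/

/-- The circle `S¹ ≅ ℝ/ℤ`. -/
abbrev S1 : Type := AddCircle (1 : ℝ)

instance fact_zero_lt_one' : Fact ((0 : ℝ) < 1) := ⟨one_pos⟩

/-- The canonical projection `ℝ → ℝ/ℤ`. -/
def toS1 (t : ℝ) : S1 := (t : S1)

/-- `g` acts as an orientation-preserving circle map: it admits a monotone degree-one lift. -/
def OrientPres {G : Type*} [Monoid G] [MulAction G S1] (g : G) : Prop :=
  ∃ F : ℝ → ℝ, Monotone F ∧ (∀ t, F (t + 1) = F t + 1) ∧ ∀ t : ℝ, g • toS1 t = toS1 (F t)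

/-- The action of `G` on the circle is by homeomorphisms (continuity of each element suffices,
since a group action consists of bijections with continuous inverses given by the action of
inverses). -/
def ActsByHomeos (G : Type*) [Monoid G] [MulAction G S1] : Prop :=
  ∀ g : G, Continuous fun x : S1 => g • x

/-- The action of `G` on the circle is faithful, i.e. `G` is (identified with) a subgroup of
the homeomorphism group of the circle. -/
def FaithfulAct (G : Type*) [Monoid G] [MulAction G S1] : Prop :=
  ∀ g : G, (∀ x : S1, g • x = x) → g = 1

/-- Minimality: every orbit is dense. -/
def MinimalAct (G : Type*) [Monoid G] [MulAction G S1] : Prop :=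
  ∀ x : S1, Dense (MulAction.orbit G x)

/-- A closed interval (arc) of the circle: the image of a closed interval of length at most one. -/
def IsClosedArc (I : Set S1) : Prop :=
  ∃ a b : ℝ, a ≤ b ∧ b ≤ a + 1 ∧ I = toS1 '' Set.Icc a b

/-- An interval (arc) of the circle: the image of an order-connected subset of `ℝ`. -/
def IsArc (I : Set S1) : Prop :=
  ∃ S : Set ℝ, S.OrdConnected ∧ I = toS1 '' S

/-- Proximality: every proper closed interval can be contracted to arbitrarily small diameter. -/
def ProximalAct (G : Type*) [Monoid G] [MulAction G S1] : Prop :=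
  ∀ I : Set S1, IsClosedArc I → I ≠ Set.univ → ∀ ε : ℝ, 0 < ε →
    ∃ g : G, Metric.diam ((fun x : S1 => g • x) '' I) < ε

/-- The support of a circle homeomorphism: the closure of the set of non-fixed points. -/
def homSupp {G : Type*} [Monoid G] [MulAction G S1] (g : G) : Set S1 :=
  closure {x : S1 | g • x ≠ x}

/-- Topological nonfreeness: some nontrivial element has a fixed-point set with nonempty
interior. -/
def TopNonfree (G : Type*) [Group G] [MulAction G S1] : Prop :=
  ∃ g : G, g ≠ 1 ∧ (interior {x : S1 | g • x = x}).Nonempty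

/-! ## Probability measures on countable groups, entropy and random walks -/

/-- Nondegeneracy: the semigroup generated by the support of `μ` is all of `G`. -/
def Nondeg {G : Type*} [Group G] (μ : PMF G) : Prop :=
  Subsemigroup.closure μ.support = ⊤

/-- The summand `-μ(g) log μ(g)` in the Shannon entropy. -/
def entTerm {G : Type*} (μ : PMF G) (g : G) : ℝ :=
  -((μ g).toReal * Real.log (μ g).toReal)

/-- Finiteness of the Shannon entropy `H(μ) = -∑ μ(g) log μ(g)`. -/
def FiniteShannonEntropy {G : Type*} (μ : PMF G) : Prop :=
  Summable (entTerm μ)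

/-- The Shannon entropy `H(μ) = -∑ μ(g) log μ(g)`. -/
def pmfEntropy {G : Type*} (μ : PMF G) : ℝ :=
  ∑' g, entTerm μ g

/-- Convolution of two probability measures on a group. -/
def pmfConv {G : Type*} [Mul G] (μ ν : PMF G) : PMF G :=
  μ.bind fun g => ν.map fun h => g * h

/-- Convolution powers `μ^{*n}` (with `μ^{*0} = δ_e`). -/
def pmfPow {G : Type*} [Monoid G] (μ : PMF G) : ℕ → PMF G
  | 0 => PMF.pure 1
  | n + 1 => pmfConv (pmfPow μ n) μ

/-- The lazy version `(1/2) μ + (1/2) δ_e` of `μ`. -/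
def lazyPMF {G : Type*} [One G] (μ : PMF G) : PMF G :=
  (PMF.bernoulli 2⁻¹ (by norm_num)).bind fun b => if b then μ else PMF.pure 1

/-- `P` is the law on the space of trajectories `G^ℕ` of the right `μ`-random walk
`w₀ = e`, `wₙ₊₁ = wₙ gₙ₊₁` with i.i.d. increments of law `μ`: it is the probability measure
whose cylinder probabilities are given by products of increments. -/
def IsRWMeasure {G : Type*} [Group G] [MeasurableSpace G] (μ : PMF G)
    (P : Measure (ℕ → G)) : Prop :=
  IsProbabilityMeasure P ∧
    ∀ (n : ℕ) (y : ℕ → G), y 0 = 1 →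
      P {w | ∀ k ≤ n, w k = y k} = ∏ k ∈ Finset.range n, μ ((y k)⁻¹ * y (k + 1))

/-- `ν` is a `μ`-stationary measure on the circle: `ν = μ * ν`. -/
def IsStationaryS1 {G : Type*} [Monoid G] [MulAction G S1] (μ : PMF G) (ν : Measure S1) : Prop :=
  ∀ s : Set S1, MeasurableSet s → ν s = ∑' g : G, μ g * ν ((fun x : S1 => g • x) ⁻¹' s)

/-- `ν` is the unique `μ`-stationary probability measure on the circle. -/
def IsUniqueStationaryS1 {G : Type*} [Monoid G] [MulAction G S1] (μ : PMF G)
    (ν : Measure S1) : Prop :=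
  IsProbabilityMeasure ν ∧ IsStationaryS1 μ ν ∧
    ∀ ν' : Measure S1, IsProbabilityMeasure ν' → IsStationaryS1 μ ν' → ν' = ν

/-! ## μ-boundaries and the Poisson boundary -/

/-- `(X, ν)`, together with the boundary map `bnd`, is a `μ`-boundary of `G`: a probability
space with a measurable `G`-action and a shift-invariant measurable map from the space of
trajectories of the `μ`-random walk pushing the trajectory law forward to `ν`. -/
structure IsMuBoundary {G X : Type*} [Group G] [MeasurableSpace G] [MeasurableSpace X]
    (μ : PMF G) (P : Measure (ℕ → G)) (act : G → X → X) (ν : Measure X)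
    (bnd : (ℕ → G) → X) : Prop where
  isRW : IsRWMeasure μ P
  probν : IsProbabilityMeasure ν
  act_one : ∀ x, act 1 x = x
  act_mul : ∀ g h x, act (g * h) x = act g (act h x)
  measAct : ∀ g, Measurable (act g)
  measBnd : Measurable bnd
  shiftInv : ∀ᵐ w ∂P, bnd (fun n => w (n + 1)) = bnd w
  push : Measure.map bnd P = ν

/-- `(X, ν)` is the Poisson boundary of `(G, μ)`: it is a `μ`-boundary and every `μ`-boundary
is a `G`-equivariant measurable quotient of it. -/
def IsPoissonBoundary {G : Type*} {X : Type} [Group G] [MeasurableSpace G] [MeasurableSpace X]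
    (μ : PMF G) (P : Measure (ℕ → G)) (act : G → X → X) (ν : Measure X)
    (bnd : (ℕ → G) → X) : Prop :=
  IsMuBoundary μ P act ν bnd ∧
    ∀ (Y : Type) [MeasurableSpace Y] (actY : G → Y → Y) (lam : Measure Y)
      (bndY : (ℕ → G) → Y), IsMuBoundary μ P actY lam bndY →
      ∃ π : X → Y, Measurable π ∧ Measure.map π ν = lam ∧
        (∀ g : G, ∀ᵐ x ∂ν, π (act g x) = actY g (π x)) ∧
        (∀ᵐ w ∂P, π (bnd w) = bndY w)

/-- Weak-* convergence `(wₙ)_* ν → δ_z` of the translates of `ν` along a trajectory `w` towards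
the point mass at `z`. -/
def WeakStarToDirac {G : Type*} [Monoid G] [MulAction G S1] (ν : Measure S1)
    (w : ℕ → G) (z : S1) : Prop :=
  ∀ f : C(S1, ℝ), Tendsto (fun n => ∫ x, f ((w n) • x) ∂ν) atTop (𝓝 (f z))

/-! ## Disintegration and conditional entropy -/

/-- `Pc` is the disintegration `ℙ = ∫_X ℙ^ξ dν(ξ)` of the trajectory measure `P` with respect to
the boundary map `bnd : G^ℕ → X`. -/
structure IsDisintegration {G X : Type*} [MeasurableSpace G] [MeasurableSpace X]
    (P : Measure (ℕ → G)) (ν : Measure X) (bnd : (ℕ → G) → X)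
    (Pc : X → Measure (ℕ → G)) : Prop where
  meas : ∀ s : Set (ℕ → G), MeasurableSet s → Measurable fun ξ => Pc ξ s
  prob : ∀ᵐ ξ ∂ν, IsProbabilityMeasure (Pc ξ)
  fiber : ∀ᵐ ξ ∂ν, Pc ξ {w | bnd w ≠ ξ} = 0
  total : ∀ s : Set (ℕ → G), MeasurableSet s → P s = ∫⁻ ξ, Pc ξ s ∂ν

/-- The conditional entropy `H_ξ(αₙ)` of the position of the random walk at time `n` with
respect to the conditional measure `ℙ^ξ`. -/
def condEntropyAt {G X : Type*} [MeasurableSpace G] (Pc : X → Measure (ℕ → G)) (n : ℕ)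
    (ξ : X) : ℝ :=
  ∑' g : G, -(((Pc ξ) {w | w n = g}).toReal * Real.log ((Pc ξ) {w | w n = g}).toReal)

/-- The mean conditional entropy `H_𝐗(αₙ) = ∫_X H_ξ(αₙ) dν(ξ)` of the time-`n` position over
the `μ`-boundary `(X, ν)`. -/
def meanCondEntropy {G X : Type*} [MeasurableSpace G] [MeasurableSpace X] (ν : Measure X)
    (Pc : X → Measure (ℕ → G)) (n : ℕ) : ℝ :=
  ∫ ξ, condEntropyAt Pc n ξ ∂ν

/-! ## Collections and trajectories (Erschler's method) -/

/-- A collection of length `n`: a set of times `I = {i₁ < ⋯ < i_k} ⊆ {1, …, n}` together with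
prescribed increments `x_l ∈ S` for the remaining times `l ∈ {1, …, n} ∖ I` (the values of `x`
outside these times are normalised to `1`). -/
structure Collection (G : Type*) [One G] (S : Set G) (n : ℕ) where
  I : Finset ℕ
  hI : ∀ i ∈ I, 1 ≤ i ∧ i ≤ n
  x : ℕ → G
  hx_mem : ∀ l, 1 ≤ l → l ≤ n → l ∉ I → x l ∈ S
  hx_canon : ∀ l, l = 0 ∨ n < l ∨ l ∈ I → x l = 1

/-- The set of trajectories `T^{a,b}(q)` associated with a collection `q`: trajectories starting
at the identity, with jump `x_l` at each time `l ∉ I` and jump `a` or `b` at each time of `I`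
(normalised to be constant after time `n`). -/
def trajSet {G : Type*} [Group G] {S : Set G} {n : ℕ} (a b : G) (q : Collection G S n) :
    Set (ℕ → G) :=
  {y | y 0 = 1 ∧
    (∀ l, 1 ≤ l → l ≤ n →
      (l ∈ q.I → (y l = y (l - 1) * a ∨ y l = y (l - 1) * b)) ∧
      (l ∉ q.I → y l = y (l - 1) * q.x l)) ∧
    ∀ l, n ≤ l → y l = y n}

/-- `T^{a,b}(q)` is satisfactory: distinct trajectories in it arrive at distinct group elements
at time `n`. -/
def Satisfactory {G : Type*} [Group G] {S : Set G} {n : ℕ} (a b : G)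
    (q : Collection G S n) : Prop :=
  ∀ y ∈ trajSet a b q, ∀ y' ∈ trajSet a b q, y ≠ y' → y n ≠ y' n

/-- The cylinder `[y]` of infinite trajectories agreeing with `y` up to time `n`. -/
def cylOf {G : Type*} (n : ℕ) (y : ℕ → G) : Set (ℕ → G) :=
  {w | ∀ k, 1 ≤ k → k ≤ n → w k = y k}

/-! ## Domination of intervals and good collections -/

/-- `I₁` dominates `I₂` if they are disjoint or the interior of `I₁` contains `I₂`. -/
def Dominates (I₁ I₂ : Set S1) : Prop :=
  Disjoint I₁ I₂ ∨ I₂ ⊆ interior I₁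

/-- The defining property of `ξ`-good collections (without maximality): for every trajectory in
`T^{a,e}(q)` and every time `i ∈ I`, the interval `y_{i-1}(J)` dominates all earlier
translates `y_l(J)`, and `y_i⁻¹(ξ) ∉ J`. -/
def GoodCore {G : Type*} [Group G] [MulAction G S1] {S : Set G} {n : ℕ} (a : G) (J : Set S1)
    (ξ : S1) (q : Collection G S n) : Prop :=
  ∀ y ∈ trajSet a 1 q, ∀ i ∈ q.I,
    (∀ l, l < i - 1 →
      Dominates ((fun z : S1 => y (i - 1) • z) '' J) ((fun z : S1 => y l • z) '' J)) ∧
    (y i)⁻¹ • ξ ∉ J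

/-- `q` is `ξ`-good: it satisfies `GoodCore` and its set of times is maximal among subsets of
`{1, …, n}` with this property. -/
def IsXiGood {G : Type*} [Group G] [MulAction G S1] {S : Set G} {n : ℕ} (a : G) (J : Set S1)
    (ξ : S1) (q : Collection G S n) : Prop :=
  GoodCore a J ξ q ∧
    ∀ q' : Collection G S n, q.I ⊂ q'.I → (∀ l ∉ q'.I, q'.x l = q.x l) →
      ¬ GoodCore a J ξ q'

/-! ## The counting random variables `Z` and `W` -/

/-- The random variable `Z^J_{n,s}`: the number of times `1 ≤ k ≤ ⌈n/s⌉` such that the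
interval `w_{ks}(J)` dominates `w_{js}(J)` for all `0 ≤ j ≤ k - 1`. -/
def Zvar {G : Type*} [Monoid G] [MulAction G S1] (J : Set S1) (n s : ℕ) (w : ℕ → G) : ℕ :=
  Nat.card {k : ℕ // 1 ≤ k ∧ k ≤ ⌈(n : ℝ) / (s : ℝ)⌉₊ ∧
    ∀ j < k, Dominates ((fun z : S1 => w (k * s) • z) '' J) ((fun z : S1 => w (j * s) • z) '' J)}

/-- The random variable `Wₙ`: the number of times `1 ≤ k ≤ n` such that `w_k(J)` dominates all
earlier `w_j(J)`, `w_k⁻¹(ξ(w)) ∉ J`, and the increment `g_{k+1} ∈ {a, e}`. -/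
def Wvar {G : Type*} [Group G] [MulAction G S1] (J : Set S1) (a : G) (bnd : (ℕ → G) → S1)
    (n : ℕ) (w : ℕ → G) : ℕ :=
  Nat.card {k : ℕ // 1 ≤ k ∧ k ≤ n ∧
    (∀ j < k, Dominates ((fun z : S1 => w k • z) '' J) ((fun z : S1 => w j • z) '' J)) ∧
    (w k)⁻¹ • bnd w ∉ J ∧
    ((w k)⁻¹ * w (k + 1) = a ∨ (w k)⁻¹ * w (k + 1) = 1)}

/-! ## Piecewise affine homeomorphisms, breakpoints and configurations -/

/-- `g` acts affinely (with positive slope) on the arc that is the projection of `(t₁, t₂)`. -/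
def AffineOnArc {G : Type*} [Monoid G] [MulAction G S1] (g : G) (t₁ t₂ : ℝ) : Prop :=
  ∃ a b : ℝ, 0 < a ∧ ∀ t ∈ Set.Ioo t₁ t₂, g • toS1 t = toS1 (a * t + b)

/-- `g` acts as a piecewise affine homeomorphism: there is a finite set `D` of points of the
circle away from which `g` is affine. -/
def IsPAff {G : Type*} [Monoid G] [MulAction G S1] (g : G) : Prop :=
  ∃ D : Finset ℝ, ∀ t₁ t₂ : ℝ, t₁ < t₂ →
    (∀ t ∈ Set.Ioo t₁ t₂, ∀ d ∈ D, toS1 t ≠ toS1 d) → AffineOnArc g t₁ t₂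

/-- `g` has right derivative (slope) `a` at `x`. -/
def HasRightSlope {G : Type*} [Monoid G] [MulAction G S1] (g : G) (x : S1) (a : ℝ) : Prop :=
  0 < a ∧ ∃ t₀ b ε : ℝ, 0 < ε ∧ toS1 t₀ = x ∧
    ∀ t ∈ Set.Ico t₀ (t₀ + ε), g • toS1 t = toS1 (a * t + b)

/-- `g` has left derivative (slope) `a` at `x`. -/
def HasLeftSlope {G : Type*} [Monoid G] [MulAction G S1] (g : G) (x : S1) (a : ℝ) : Prop :=
  0 < a ∧ ∃ t₀ b ε : ℝ, 0 < ε ∧ toS1 t₀ = x ∧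
    ∀ t ∈ Set.Ioc (t₀ - ε) t₀, g • toS1 t = toS1 (a * t + b)

open Classical in
/-- The right slope of `g` at `x` (junk value `1` if it does not exist). -/
def rightSlope {G : Type*} [Monoid G] [MulAction G S1] (g : G) (x : S1) : ℝ :=
  if h : ∃ a : ℝ, HasRightSlope g x a then h.choose else 1

open Classical in
/-- The left slope of `g` at `x` (junk value `1` if it does not exist). -/
def leftSlope {G : Type*} [Monoid G] [MulAction G S1] (g : G) (x : S1) : ℝ :=
  if h : ∃ a : ℝ, HasLeftSlope g x a then h.choose else 1

/-- The set of breakpoints of `g`: the points where the derivative of `g` is not defined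
(no common one-sided slope). -/
def brkSet {G : Type*} [Monoid G] [MulAction G S1] (g : G) : Set S1 :=
  {x : S1 | ¬ ∃ a : ℝ, HasRightSlope g x a ∧ HasLeftSlope g x a}

/-- The set `Br` of all breakpoints of elements of `G`. -/
def BrSetAll (G : Type*) [Monoid G] [MulAction G S1] : Set S1 :=
  ⋃ g : G, brkSet g

/-- The configuration `C_g(x) = log((g⁻¹)'(x⁺)) − log((g⁻¹)'(x⁻))` recording the jump of the
derivative of `g⁻¹` at `x`. -/
def config {G : Type*} [Group G] [MulAction G S1] (g : G) (x : S1) : ℝ :=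
  Real.log (rightSlope g⁻¹ x) - Real.log (leftSlope g⁻¹ x)

/-- The action `g · C = C_g + S_g C` of `G` on configurations, where `(S_g C)(x) = C(g⁻¹ x)`. -/
def confAct {G : Type*} [Group G] [MulAction G S1] (g : G) (C : S1 → ℝ) : S1 → ℝ :=
  fun x => config g x + C (g⁻¹ • x)



/-!
Every closed subset of the circle is an intersection of closed arcs, so the minimality of `J`
forces `J = supp a`; the circle being connected, `supp a` is then not contained in the interior
of `J`.

Satisfactory: let `y, y'` be trajectories of a good collection which agree at a time `t + 1 ∈ I`
but whose increments at `t` differ. Their discrepancy `y' t * (y t)⁻¹` is the conjugate of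
`a^{∓1}` by `y t`, so its support is `y t (supp a)`. On the other hand it is a product of
elements supported in the earlier translates `y k J`, all dominated by `y t J`, so this support
lies in the interior of `y t J`, i.e. `supp a ⊆ int J`. Going backwards from time `n`, two
trajectories ending at the same point therefore coincide.

Disjointness: if two good collections share a trajectory, their union is again good. A trajectory
of the union differs from a trajectory of either collection only by steps in `{a, e}`; such steps
are supported in `J`, so they preserve domination, and, by induction on time, the condition
`y_i⁻¹ ξ ∉ J`. Maximality then forces the two collections to coincide.
-/

open Pointwise MulAction

theorem exists_isClosedArc_superset_notMem {K : Set S1} (hK : IsClosed K) {x : S1}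
    (hx : x ∉ K) : ∃ J₀, IsClosedArc J₀ ∧ K ⊆ J₀ ∧ x ∉ J₀ := by
  obtain ⟨t, rfl⟩ : ∃ t : ℝ, toS1 t = x := QuotientAddGroup.mk_surjective x
  have hnear : ∀ᶠ s in 𝓝 t, toS1 s ∉ K :=
    (continuous_quotient_mk'.tendsto t).eventually (hK.isOpen_compl.mem_nhds hx)
  obtain ⟨ε, hε, hball⟩ := Metric.eventually_nhds_iff.mp hnear
  set δ := min (ε / 2) (1 / 2)
  have hδ : 0 < δ := by positivity
  have hδε : δ < ε := (min_le_left _ _).trans_lt (by linarith)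
  have hδ1 : δ ≤ 1 / 2 := min_le_right _ _
  refine ⟨toS1 '' Icc (t + δ) (t + 1 - δ), ⟨_, _, by linarith, by linarith, rfl⟩, ?_, ?_⟩
  · intro z hz
    set s : ℝ := (AddCircle.equivIco 1 (t - δ) z : ℝ)
    have hs : s ∈ Ico (t - δ) (t - δ + 1) := (AddCircle.equivIco 1 (t - δ) z).2
    have hsz : toS1 s = z := AddCircle.coe_equivIco
    refine ⟨s, ⟨?_, by linarith [hs.2]⟩, hsz⟩
    by_contra hlt
    refine hball ?_ (hsz ▸ hz)
    rw [Real.dist_eq, abs_lt]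
    constructor <;> linarith [hs.1]
  · rintro ⟨s, hs, hst⟩
    have := (AddCircle.coe_eq_coe_iff_of_mem_Ico (p := 1) (a := t)
      ⟨by linarith [hs.1], by linarith [hs.2]⟩ ⟨le_rfl, by linarith⟩).mp hst
    linarith [hs.1]

theorem subset_of_isClosedArc_minimal {K J : Set S1} (hK : IsClosed K)
    (hJmin : ∀ J' : Set S1, IsClosedArc J' → K ⊆ J' → J ⊆ J') : J ⊆ K := by
  intro x hxJ
  by_contra hxK
  obtain ⟨J₀, hJ₀, hKJ₀, hxJ₀⟩ := exists_isClosedArc_superset_notMem hK hxK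
  exact hxJ₀ (hJmin J₀ hJ₀ hKJ₀ hxJ)

theorem not_subset_interior_of_isClosedArc_minimal {K J : Set S1} (hK : IsClosed K)
    (hne : K.Nonempty) (hne' : Kᶜ.Nonempty)
    (hJmin : ∀ J' : Set S1, IsClosedArc J' → K ⊆ J' → J ⊆ J') : ¬ K ⊆ interior J := by
  intro hKJ
  have hopen : IsOpen K := subset_interior_iff_isOpen.mp
    (hKJ.trans (interior_mono (subset_of_isClosedArc_minimal hK hJmin)))
  rcases isClopen_iff.mp ⟨hK, hopen⟩ with h | h
  · exact hne.ne_empty h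
  · exact hne'.ne_empty (by rw [h, compl_univ])

theorem movedBy_mul_subset {G α : Type*} [Group G] [MulAction G α] (g h : G) :
    (fixedBy α (g * h))ᶜ ⊆ (fixedBy α g)ᶜ ∪ (fixedBy α h)ᶜ := by
  rw [← compl_inter]
  exact compl_subset_compl.mpr (fixedBy_mul α g h)

section Support

variable {G : Type*} [Group G] [MulAction G S1]

theorem homSupp_eq_closure_movedBy (g : G) : homSupp g = closure (fixedBy S1 g)ᶜ := rfl

theorem movedBy_subset_homSupp (g : G) : (fixedBy S1 g)ᶜ ⊆ homSupp g := subset_closure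

theorem homSupp_inv (g : G) : homSupp g⁻¹ = homSupp g := by
  simp only [homSupp_eq_closure_movedBy, fixedBy_inv]

theorem homSupp_one : homSupp (1 : G) = ∅ := by
  simp [homSupp_eq_closure_movedBy]

theorem homSupp_mul_subset (g h : G) : homSupp (g * h) ⊆ homSupp g ∪ homSupp h := by
  simp only [homSupp_eq_closure_movedBy, ← closure_union]
  exact closure_mono (movedBy_mul_subset g h)

theorem homSupp_conj [ContinuousConstSMul G S1] (g c : G) :
    homSupp (g * c * g⁻¹) = g • homSupp c := by
  rw [homSupp_eq_closure_movedBy, homSupp_eq_closure_movedBy, ← smul_fixedBy, ← smul_set_compl,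
    closure_smul]

theorem smul_mem_of_homSupp_subset {g : G} {J : Set S1} (hg : homSupp g ⊆ J) {x : S1}
    (hx : x ∈ J) : g • x ∈ J := by
  by_cases hfix : g • x = x
  · rwa [hfix]
  · exact hg (movedBy_subset_homSupp g fun h => hfix (smul_mem_fixedBy_iff_mem_fixedBy.mp h))

theorem homSupp_mul_inv_subset {J : Set S1} {c d : G}
    (h : c = d ∨ homSupp c ⊆ J ∧ homSupp d ⊆ J) : homSupp (c * d⁻¹) ⊆ J := by
  rcases h with rfl | ⟨hc, hd⟩
  · simp [homSupp_one]
  · exact (homSupp_mul_subset c d⁻¹).trans (union_subset hc (homSupp_inv d ▸ hd))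

theorem homSupp_subset_of_eq_or_eq_one {a c : G} (h : c = a ∨ c = 1) :
    homSupp c ⊆ homSupp a := by
  rcases h with rfl | rfl
  · exact subset_rfl
  · simp [homSupp_one]

end Support

theorem Dominates.smul {G : Type*} [Group G] [MulAction G S1] [ContinuousConstSMul G S1]
    {A B : Set S1} (h : Dominates A B) (g : G) : Dominates (g • A) (g • B) := by
  rcases h with h | h
  · exact Or.inl (disjoint_smul_set.mpr h)
  · exact Or.inr (by rw [interior_smul]; exact smul_set_mono h)

theorem Dominates.smul_of_homSupp_subset {G : Type*} [Group G] [MulAction G S1]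
    {A B C : Set S1} {u : G} (hB : Dominates A B) (hC : Dominates A C) (hu : homSupp u ⊆ C) :
    Dominates A (u • B) := by
  have key : ∀ b, u • b = b ∨ b ∈ C ∧ u • b ∈ C := by
    intro b
    by_cases hfix : u • b = b
    · exact Or.inl hfix
    · have hb : b ∈ C := hu (movedBy_subset_homSupp u hfix)
      exact Or.inr ⟨hb, smul_mem_of_homSupp_subset hu hb⟩
  rcases hC with hC | hC <;> rcases hB with hB | hB
  · refine Or.inl (Set.disjoint_left.mpr ?_)
    rintro _ hA ⟨b, hb, rfl⟩
    rcases key b with h | ⟨-, h⟩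
    · exact Set.disjoint_left.mp hB (h ▸ hA) hb
    · exact Set.disjoint_left.mp hC hA h
  · refine Or.inr ?_
    rintro _ ⟨b, hb, rfl⟩
    rcases key b with h | ⟨h, -⟩
    · rw [← h] at hb
      exact hB hb
    · exact absurd h (Set.disjoint_left.mp hC (interior_subset (hB hb)))
  · refine Or.inl (Set.disjoint_left.mpr ?_)
    rintro _ hA ⟨b, hb, rfl⟩
    rcases key b with h | ⟨h, -⟩
    · exact Set.disjoint_left.mp hB (h ▸ hA) hb
    · exact Set.disjoint_left.mp hB (interior_subset (hC h)) hb
  · refine Or.inr ?_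
    rintro _ ⟨b, hb, rfl⟩
    rcases key b with h | ⟨-, h⟩
    · rw [← h] at hb
      exact hB hb
    · exact hC h

theorem closure_subset_interior_of_dominates {A M : Set S1} {B : ℕ → Set S1} {t : ℕ}
    (hB : ∀ k < t, IsClosed (B k)) (hdom : ∀ k < t, Dominates A (B k)) (hMA : M ⊆ A)
    (hMB : M ⊆ ⋃ k < t, B k) : closure M ⊆ interior A := by
  have hF : IsClosed (⋃ k ∈ {k | k < t ∧ B k ⊆ interior A}, B k) :=
    ((Set.finite_lt_nat t).subset fun _ hk => hk.1).isClosed_biUnion fun k hk => hB k hk.1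
  refine (closure_minimal ?_ hF).trans (iUnion₂_subset fun k hk => hk.2)
  intro x hx
  obtain ⟨k, hk, hxk⟩ := mem_iUnion₂.mp (hMB hx)
  rcases hdom k hk with hd | hd
  · exact absurd hxk (Set.disjoint_left.mp hd (hMA hx))
  · exact mem_iUnion₂.mpr ⟨k, ⟨hk, hd⟩, hxk⟩

section Increments

variable {G : Type*} [Group G]

def incr (y : ℕ → G) (t : ℕ) : G := (y t)⁻¹ * y (t + 1)

@[simp]
theorem mul_incr (y : ℕ → G) (t : ℕ) : y t * incr y t = y (t + 1) :=
  mul_inv_cancel_left _ _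

def ofIncr (f : ℕ → G) : ℕ → G
  | 0 => 1
  | t + 1 => ofIncr f t * f t

@[simp]
theorem incr_ofIncr (f : ℕ → G) (t : ℕ) : incr (ofIncr f) t = f t := by
  simp [incr, ofIncr]

theorem mul_inv_succ_eq (y z : ℕ → G) (t : ℕ) :
    z (t + 1) * (y (t + 1))⁻¹ =
      z t * (y t)⁻¹ * (y t * (incr z t * (incr y t)⁻¹) * (y t)⁻¹) := by
  simp only [incr]
  group

theorem movedBy_mul_inv_subset {α : Type*} [MulAction G α] {y z : ℕ → G} (h0 : z 0 = y 0)
    (t : ℕ) :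
    (fixedBy α (z t * (y t)⁻¹))ᶜ ⊆ ⋃ k < t, y k • (fixedBy α (incr z k * (incr y k)⁻¹))ᶜ := by
  induction t with
  | zero => simp [h0]
  | succ t ih =>
    rw [mul_inv_succ_eq]
    refine (movedBy_mul_subset _ _).trans (union_subset (ih.trans ?_) ?_)
    · exact biUnion_mono (fun k hk => Nat.lt_succ_of_lt hk) fun _ _ => subset_rfl
    · rw [← smul_fixedBy, ← smul_set_compl]
      exact subset_biUnion_of_mem (u := fun k => y k • (fixedBy α (incr z k * (incr y k)⁻¹))ᶜ)
        (Nat.lt_succ_self t)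

theorem dominates_of_homSupp_subset [MulAction G S1] [ContinuousConstSMul G S1] {J : Set S1}
    {y z : ℕ → G} (hJ : ∀ k, homSupp (incr z k * (incr y k)⁻¹) ⊆ J) {l j : ℕ} (hlj : l < j)
    (hdom : ∀ k, l ≤ k → k < j → Dominates (y j • J) (y k • J)) :
    Dominates (z j • J) (z l • J) := by
  set D : ℕ → G := fun k => z k * (y k)⁻¹
  -- `z l • J = D l • y l • J`, so the case `k = j`, translated by `D j`, is the claim.
  have key : ∀ k, l ≤ k → k ≤ j → Dominates (y j • J) (((D k)⁻¹ * D l) • y l • J) := by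
    intro k hlk
    induction k, hlk using Nat.le_induction with
    | base => intro _; simpa using hdom l le_rfl hlj
    | succ k hlk ih =>
      intro hkj
      have hstep : (D (k + 1))⁻¹ * D l =
          (y k * (incr z k * (incr y k)⁻¹) * (y k)⁻¹)⁻¹ * ((D k)⁻¹ * D l) := by
        simp only [D, mul_inv_succ_eq]
        group
      rw [hstep, mul_smul]
      refine (ih (by omega)).smul_of_homSupp_subset (hdom k hlk (by omega)) ?_
      rw [homSupp_inv, homSupp_conj]
      exact smul_set_mono (hJ k)
  simpa [D, smul_smul, mul_assoc] using (key j hlj.le le_rfl).smul (D j)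

end Increments

section Collections

variable {G : Type*} [Group G] {S : Set G} {n : ℕ} {a : G}

theorem mem_trajSet_iff {q : Collection G S n} {y : ℕ → G} :
    y ∈ trajSet a 1 q ↔ y 0 = 1 ∧ ∀ t, (t + 1 ∈ q.I → incr y t = a ∨ incr y t = 1) ∧
      (t + 1 ∉ q.I → incr y t = q.x (t + 1)) := by
  simp only [incr, inv_mul_eq_iff_eq_mul]
  constructor
  · rintro ⟨h0, hstep, hconst⟩
    refine ⟨h0, fun t => ?_⟩
    rcases le_or_gt (t + 1) n with ht | ht
    · simpa using hstep (t + 1) (by omega) ht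
    · have hnot : t + 1 ∉ q.I := fun h => by have := (q.hI _ h).2; omega
      rw [q.hx_canon (t + 1) (Or.inr (Or.inl ht)), hconst (t + 1) (by omega), hconst t (by omega)]
      simp [hnot]
  · rintro ⟨h0, hstep⟩
    refine ⟨h0, fun l hl1 _ => ?_, fun l hl => ?_⟩
    · obtain ⟨t, rfl⟩ : ∃ t, l = t + 1 := ⟨l - 1, by omega⟩
      simpa using hstep t
    · induction l, hl using Nat.le_induction with
      | base => rfl
      | succ l hl ih =>
        have hnot : l + 1 ∉ q.I := fun h => by have := (q.hI _ h).2; omega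
        rw [(hstep l).2 hnot, q.hx_canon (l + 1) (Or.inr (Or.inl (by omega))), mul_one, ih]

theorem Collection.x_eq_of_mem_trajSet {q₁ q₂ : Collection G S n} {y : ℕ → G}
    (hy₁ : y ∈ trajSet a 1 q₁) (hy₂ : y ∈ trajSet a 1 q₂) {l : ℕ} (hl₁ : l ∉ q₁.I)
    (hl₂ : l ∉ q₂.I) : q₁.x l = q₂.x l := by
  rcases l with _ | t
  · rw [q₁.hx_canon 0 (Or.inl rfl), q₂.hx_canon 0 (Or.inl rfl)]
  · rw [← ((mem_trajSet_iff.mp hy₁).2 t).2 hl₁, ((mem_trajSet_iff.mp hy₂).2 t).2 hl₂]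

theorem Collection.ext {q₁ q₂ : Collection G S n} (hI : q₁.I = q₂.I) (hx : q₁.x = q₂.x) :
    q₁ = q₂ := by
  cases q₁
  cases q₂
  cases hI
  cases hx
  rfl

theorem Collection.eq_of_mem_trajSet {q₁ q₂ : Collection G S n} (hI : q₁.I = q₂.I)
    {y : ℕ → G} (hy₁ : y ∈ trajSet a 1 q₁) (hy₂ : y ∈ trajSet a 1 q₂) : q₁ = q₂ := by
  have hx : q₁.x = q₂.x := by
    funext l
    by_cases hl : l ∈ q₁.I
    · rw [q₁.hx_canon l (Or.inr (Or.inr hl)), q₂.hx_canon l (Or.inr (Or.inr (hI ▸ hl)))]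
    · exact Collection.x_eq_of_mem_trajSet hy₁ hy₂ hl (hI ▸ hl)
  exact Collection.ext hI hx

def Collection.union (q₁ q₂ : Collection G S n) : Collection G S n where
  I := q₁.I ∪ q₂.I
  hI i hi := (Finset.mem_union.mp hi).elim (q₁.hI i) (q₂.hI i)
  x l := if l ∈ q₂.I then 1 else q₁.x l
  hx_mem l h1 h2 hl := by
    rw [Finset.mem_union, not_or] at hl
    rw [if_neg hl.2]
    exact q₁.hx_mem l h1 h2 hl.1
  hx_canon l hl := by
    split_ifs with h
    · rfl
    · exact q₁.hx_canon l (by simpa [h] using hl)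

theorem Collection.union_x_of_notMem {q₁ q₂ : Collection G S n} {l : ℕ}
    (hl : l ∉ (q₁.union q₂).I) : (q₁.union q₂).x l = q₁.x l :=
  if_neg fun h => hl (Finset.mem_union_right _ h)

theorem Collection.union_comm {q₁ q₂ : Collection G S n} {y : ℕ → G}
    (hy₁ : y ∈ trajSet a 1 q₁) (hy₂ : y ∈ trajSet a 1 q₂) : q₁.union q₂ = q₂.union q₁ := by
  have hI : (q₁.union q₂).I = (q₂.union q₁).I := Finset.union_comm _ _
  have hx : (q₁.union q₂).x = (q₂.union q₁).x := by
    funext l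
    by_cases hl : l ∈ (q₁.union q₂).I
    · rw [(q₁.union q₂).hx_canon l (Or.inr (Or.inr hl)),
        (q₂.union q₁).hx_canon l (Or.inr (Or.inr (hI ▸ hl)))]
    · rw [Collection.union_x_of_notMem hl, Collection.union_x_of_notMem (hI ▸ hl)]
      exact Collection.x_eq_of_mem_trajSet hy₁ hy₂ (fun h => hl (Finset.mem_union_left _ h))
        fun h => hl (Finset.mem_union_right _ h)
  exact Collection.ext hI hx

theorem eq_of_mem_cylOf {q₁ q₂ : Collection G S n} {y₁ y₂ w : ℕ → G}
    (hy₁ : y₁ ∈ trajSet a 1 q₁) (hy₂ : y₂ ∈ trajSet a 1 q₂) (hw₁ : w ∈ cylOf n y₁)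
    (hw₂ : w ∈ cylOf n y₂) : y₁ = y₂ := by
  have hle : ∀ k ≤ n, y₁ k = y₂ k := by
    rintro (_ | k) hk
    · rw [hy₁.1, hy₂.1]
    · rw [← hw₁ (k + 1) (by omega) hk, hw₂ (k + 1) (by omega) hk]
  funext k
  rcases le_total k n with hk | hk
  · exact hle k hk
  · rw [hy₁.2.2 k hk, hy₂.2.2 k hk, hle n le_rfl]

variable [MulAction G S1] {J : Set S1} {ξ : S1}

theorem GoodCore.dominates {q : Collection G S n} (hq : GoodCore a J ξ q) {y : ℕ → G}
    (hy : y ∈ trajSet a 1 q) {t : ℕ} (ht : t + 1 ∈ q.I) {l : ℕ} (hl : l < t) :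
    Dominates (y t • J) (y l • J) := by
  simpa only [Set.image_smul, Nat.add_sub_cancel] using (hq y hy (t + 1) ht).1 l (by omega)

theorem homSupp_incr_subset (haJ : homSupp a ⊆ J) {q : Collection G S n} {y : ℕ → G}
    (hy : y ∈ trajSet a 1 q) {t : ℕ} (ht : t + 1 ∈ q.I) : homSupp (incr y t) ⊆ J :=
  (homSupp_subset_of_eq_or_eq_one (((mem_trajSet_iff.mp hy).2 t).1 ht)).trans haJ

theorem homSupp_incr_mul_inv_subset (haJ : homSupp a ⊆ J) {q : Collection G S n}
    {y y' : ℕ → G} (hy : y ∈ trajSet a 1 q) (hy' : y' ∈ trajSet a 1 q) (t : ℕ) :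
    homSupp (incr y' t * (incr y t)⁻¹) ⊆ J := by
  apply homSupp_mul_inv_subset
  by_cases ht : t + 1 ∈ q.I
  · exact Or.inr ⟨homSupp_incr_subset haJ hy' ht, homSupp_incr_subset haJ hy ht⟩
  · exact Or.inl (by rw [((mem_trajSet_iff.mp hy').2 t).2 ht, ((mem_trajSet_iff.mp hy).2 t).2 ht])

theorem GoodCore.inv_smul_pred_notMem (haJ : homSupp a ⊆ J) {q : Collection G S n}
    (hq : GoodCore a J ξ q) {y : ℕ → G} (hy : y ∈ trajSet a 1 q) {i : ℕ} (hi : i ∈ q.I) :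
    (y (i - 1))⁻¹ • ξ ∉ J := by
  obtain ⟨t, rfl⟩ : ∃ t, i = t + 1 := ⟨i - 1, by have := (q.hI i hi).1; omega⟩
  rw [Nat.add_sub_cancel]
  intro h
  apply (hq y hy (t + 1) hi).2
  rw [← mul_incr y t, mul_inv_rev, mul_smul]
  exact smul_mem_of_homSupp_subset (by rw [homSupp_inv]; exact homSupp_incr_subset haJ hy hi) h

theorem GoodCore.incr_eq_of_eq_succ [ContinuousConstSMul G S1] (hJ : IsClosed J)
    (haJ : homSupp a ⊆ J) (hE : ¬ homSupp a ⊆ interior J) {q : Collection G S n}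
    (hq : GoodCore a J ξ q) {y y' : ℕ → G} (hy : y ∈ trajSet a 1 q) (hy' : y' ∈ trajSet a 1 q)
    {t : ℕ} (ht : t + 1 ∈ q.I) (heq : y (t + 1) = y' (t + 1)) : incr y t = incr y' t := by
  by_contra hne
  set δ := incr y' t * (incr y t)⁻¹
  have hδ : fixedBy S1 δ = fixedBy S1 a := by
    rcases ((mem_trajSet_iff.mp hy).2 t).1 ht with h | h <;>
      rcases ((mem_trajSet_iff.mp hy').2 t).1 ht with h' | h' <;>
      simp_all [δ, fixedBy_inv]
  have hd : y' t * (y t)⁻¹ = (y t * δ * (y t)⁻¹)⁻¹ := by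
    have h := mul_inv_succ_eq y y' t
    rw [heq, mul_inv_cancel] at h
    exact eq_inv_of_mul_eq_one_left h.symm
  have hmoved : (fixedBy S1 (y' t * (y t)⁻¹))ᶜ = y t • (fixedBy S1 a)ᶜ := by
    rw [hd, fixedBy_inv, ← smul_fixedBy, smul_set_compl, hδ]
  apply hE
  have h := closure_subset_interior_of_dominates (B := fun k => y k • J)
    (M := (fixedBy S1 (y' t * (y t)⁻¹))ᶜ) (fun k _ => hJ.smul (y k))
    (fun k hk => hq.dominates hy ht hk) ?_ ?_
  · rwa [hmoved, closure_smul, ← homSupp_eq_closure_movedBy, interior_smul,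
      smul_set_subset_smul_set_iff] at h
  · rw [hmoved]
    exact smul_set_mono ((movedBy_subset_homSupp a).trans haJ)
  · refine (movedBy_mul_inv_subset (by rw [hy.1, hy'.1]) t).trans (biUnion_mono subset_rfl ?_)
    exact fun k _ => smul_set_mono
      ((movedBy_subset_homSupp _).trans (homSupp_incr_mul_inv_subset haJ hy hy' k))

theorem GoodCore.satisfactory [ContinuousConstSMul G S1] (hJ : IsClosed J)
    (haJ : homSupp a ⊆ J) (hE : ¬ homSupp a ⊆ interior J) {q : Collection G S n}
    (hq : GoodCore a J ξ q) : Satisfactory a 1 q := by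
  intro y hy y' hy' hne hn
  apply hne
  have hle : ∀ k ≤ n, y k = y' k := by
    refine fun k hk => Nat.decreasingInduction (motive := fun k _ => y k = y' k)
      (fun k _ ih => ?_) hn hk
    have hincr : incr y k = incr y' k := by
      by_cases hk' : k + 1 ∈ q.I
      · exact hq.incr_eq_of_eq_succ hJ haJ hE hy hy' hk' ih
      · rw [((mem_trajSet_iff.mp hy).2 k).2 hk', ((mem_trajSet_iff.mp hy').2 k).2 hk']
    rw [eq_mul_inv_of_mul_eq (mul_incr y k), eq_mul_inv_of_mul_eq (mul_incr y' k), ih, hincr]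
  funext k
  rcases le_total k n with hk | hk
  · exact hle k hk
  · rw [hy.2.2 k hk, hy'.2.2 k hk, hn]

theorem inv_smul_notMem_of_incr {y w : ℕ → G} (h0 : y 0 = w 0) {i : ℕ}
    (hyi : (y i)⁻¹ • ξ ∉ J)
    (hstep : ∀ t < i, incr y t ≠ incr w t → homSupp (incr y t * (incr w t)⁻¹) ⊆ J ∧
      homSupp (incr w t) ⊆ J ∧ (w (t + 1))⁻¹ • ξ ∉ J) :
    (w i)⁻¹ • ξ ∉ J := by
  intro hwi
  by_cases hfix : ξ ∈ fixedBy S1 (y i * (w i)⁻¹)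
  · apply hyi
    rw [mem_fixedBy] at hfix
    rwa [← hfix, smul_smul, inv_mul_cancel_left]
  · obtain ⟨t, ht, hξ⟩ : ∃ t < i, ξ ∈ w t • (fixedBy S1 (incr y t * (incr w t)⁻¹))ᶜ := by
      simpa using movedBy_mul_inv_subset h0 i hfix
    have hne : incr y t ≠ incr w t := fun h => by simp [h] at hξ
    obtain ⟨hδJ, hwJ, hnot⟩ := hstep t ht hne
    apply hnot
    rw [← mul_incr w t, mul_inv_rev, mul_smul]
    exact smul_mem_of_homSupp_subset (by rwa [homSupp_inv])
      (hδJ (movedBy_subset_homSupp _ (mem_smul_set_iff_inv_smul_mem.mp hξ)))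

theorem exists_mem_trajSet_incr_eq_or {q q' : Collection G S n} {y w : ℕ → G}
    (hy : y ∈ trajSet a 1 q) (hy' : y ∈ trajSet a 1 q') (hw : w ∈ trajSet a 1 (q.union q')) :
    ∃ yb ∈ trajSet a 1 q, ∀ t, incr yb t = incr w t ∨ t + 1 ∈ q'.I ∧ t + 1 ∉ q.I ∧
      homSupp (incr yb t) ⊆ homSupp a ∧ homSupp (incr w t) ⊆ homSupp a := by
  have hw' := (mem_trajSet_iff.mp hw).2
  have hyq := (mem_trajSet_iff.mp hy).2
  refine ⟨ofIncr fun t => if t + 1 ∈ q.I then incr w t else incr y t,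
    mem_trajSet_iff.mpr ⟨rfl, fun t => ?_⟩, fun t => ?_⟩
  · by_cases ht : t + 1 ∈ q.I
    · simp only [incr_ofIncr, if_pos ht]
      exact ⟨fun _ => (hw' t).1 (Finset.mem_union_left _ ht), fun h => (h ht).elim⟩
    · simp only [incr_ofIncr, if_neg ht]
      exact ⟨fun h => absurd h ht, fun _ => (hyq t).2 ht⟩
  · simp only [incr_ofIncr]
    split_ifs with ht
    · exact Or.inl rfl
    · by_cases ht' : t + 1 ∈ q'.I
      · exact Or.inr ⟨ht', ht,
          homSupp_subset_of_eq_or_eq_one (((mem_trajSet_iff.mp hy').2 t).1 ht'),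
          homSupp_subset_of_eq_or_eq_one ((hw' t).1 (Finset.mem_union_right _ ht'))⟩
      · have hnot : t + 1 ∉ (q.union q').I := fun h => (Finset.mem_union.mp h).elim ht ht'
        exact Or.inl (by rw [(hw' t).2 hnot, Collection.union_x_of_notMem hnot, (hyq t).2 ht])

theorem GoodCore.dominates_and_notMem_union [ContinuousConstSMul G S1] (haJ : homSupp a ⊆ J)
    {q q' : Collection G S n} (hq : GoodCore a J ξ q) {y w : ℕ → G} (hy : y ∈ trajSet a 1 q)
    (hy' : y ∈ trajSet a 1 q') (hw : w ∈ trajSet a 1 (q.union q')) {t : ℕ} (ht : t + 1 ∈ q.I) :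
    (∀ l < t, Dominates (w t • J) (w l • J)) ∧
      ((∀ m < t + 1, m ∈ (q.union q').I → (w m)⁻¹ • ξ ∉ J) → (w (t + 1))⁻¹ • ξ ∉ J) := by
  obtain ⟨yb, hyb, hdiff⟩ := exists_mem_trajSet_incr_eq_or hy hy' hw
  constructor
  · intro l hl
    refine dominates_of_homSupp_subset (y := yb) (fun k => homSupp_mul_inv_subset ?_) hl
      fun k _ hk => hq.dominates hyb ht hk
    rcases hdiff k with h | ⟨-, -, h₁, h₂⟩
    · exact Or.inl h.symm
    · exact Or.inr ⟨h₂.trans haJ, h₁.trans haJ⟩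
  · intro ih
    refine inv_smul_notMem_of_incr (y := yb) (by rw [hyb.1, hw.1]) (hq yb hyb _ ht).2
      fun k hk hne => ?_
    rcases hdiff k with h | ⟨hk', hkq, h₁, h₂⟩
    · exact absurd h hne
    · have hkt : k + 1 < t + 1 := lt_of_le_of_ne (by omega) fun h => hkq (h ▸ ht)
      exact ⟨homSupp_mul_inv_subset (Or.inr ⟨h₁.trans haJ, h₂.trans haJ⟩), h₂.trans haJ,
        ih (k + 1) hkt (Finset.mem_union_right _ hk')⟩

theorem GoodCore.union [ContinuousConstSMul G S1] (haJ : homSupp a ⊆ J)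
    {q₁ q₂ : Collection G S n} (hq₁ : GoodCore a J ξ q₁) (hq₂ : GoodCore a J ξ q₂) {y : ℕ → G}
    (hy₁ : y ∈ trajSet a 1 q₁) (hy₂ : y ∈ trajSet a 1 q₂) : GoodCore a J ξ (q₁.union q₂) := by
  intro w hw
  have htransfer : ∀ t, t + 1 ∈ (q₁.union q₂).I →
      (∀ l < t, Dominates (w t • J) (w l • J)) ∧
      ((∀ m < t + 1, m ∈ (q₁.union q₂).I → (w m)⁻¹ • ξ ∉ J) → (w (t + 1))⁻¹ • ξ ∉ J) := by
    intro t ht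
    rcases Finset.mem_union.mp ht with ht | ht
    · exact hq₁.dominates_and_notMem_union haJ hy₁ hy₂ hw ht
    · rw [Collection.union_comm hy₁ hy₂] at hw ⊢
      exact hq₂.dominates_and_notMem_union haJ hy₂ hy₁ hw ht
  have hpos : ∀ i ∈ (q₁.union q₂).I, ∃ t, i = t + 1 :=
    fun i hi => ⟨i - 1, by have := ((q₁.union q₂).hI i hi).1; omega⟩
  have hnotMem : ∀ i ∈ (q₁.union q₂).I, (w i)⁻¹ • ξ ∉ J := by
    intro i
    induction i using Nat.strong_induction_on with
    | _ i ih =>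
      intro hi
      obtain ⟨t, rfl⟩ := hpos i hi
      exact (htransfer t hi).2 ih
  intro i hi
  obtain ⟨t, rfl⟩ := hpos i hi
  simp only [Set.image_smul, Nat.add_sub_cancel]
  exact ⟨(htransfer t hi).1, hnotMem _ hi⟩

theorem IsXiGood.eq_of_mem_trajSet [ContinuousConstSMul G S1] (haJ : homSupp a ⊆ J)
    {q₁ q₂ : Collection G S n} (hq₁ : IsXiGood a J ξ q₁) (hq₂ : IsXiGood a J ξ q₂)
    {y : ℕ → G} (hy₁ : y ∈ trajSet a 1 q₁) (hy₂ : y ∈ trajSet a 1 q₂) : q₁ = q₂ := by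
  have hsub : ∀ {q q' : Collection G S n}, IsXiGood a J ξ q → GoodCore a J ξ q' →
      y ∈ trajSet a 1 q → y ∈ trajSet a 1 q' → q'.I ⊆ q.I := by
    intro q q' hq hq' hy hy'
    by_contra h
    refine hq.2 (q.union q') ?_ (fun l hl => Collection.union_x_of_notMem hl)
      (hq.1.union haJ hq' hy hy')
    exact Finset.ssubset_iff_subset_ne.mpr ⟨Finset.subset_union_left,
      fun he => h (by rw [he]; exact Finset.subset_union_right)⟩
  exact Collection.eq_of_mem_trajSet
    (Finset.Subset.antisymm (hsub hq₂ hq₁.1 hy₂ hy₁) (hsub hq₁ hq₂.1 hy₁ hy₂)) hy₁ hy₂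

end Collections

theorem xi_good_implies_entropy_conditions_general
    {G : Type} [Group G] [MulAction G S1]
    (hhomeo : ActsByHomeos G)
    (μ : PMF G)
    (ν : Measure S1)
    (a : G) (hsupp_int : (interior (homSupp a)).Nonempty)
    (hcompl_int : (interior ((homSupp a)ᶜ)).Nonempty)
    (J : Set S1) (hJsupp : homSupp a ⊆ J)
    (hJmin : ∀ J' : Set S1, IsClosedArc J' → homSupp a ⊆ J' → J ⊆ J')
    (Ξ : ℕ → Set S1)
    (A : (n : ℕ) → S1 → Set (Collection G μ.support n))
    (hgood : ∀ n : ℕ, 1 ≤ n → ∀ᵐ ξ ∂ν, ξ ∈ Ξ n → ∀ q ∈ A n ξ, IsXiGood a J ξ q) :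
    ∀ n : ℕ, 1 ≤ n → ∀ᵐ ξ ∂ν, ξ ∈ Ξ n →
      (∀ q ∈ A n ξ, Satisfactory a 1 q) ∧
      (∀ q₁ ∈ A n ξ, ∀ q₂ ∈ A n ξ, q₁ ≠ q₂ →
        ∀ y₁ ∈ trajSet a 1 q₁, ∀ y₂ ∈ trajSet a 1 q₂,
          Disjoint (cylOf n y₁) (cylOf n y₂)) ∧
      (∀ q ∈ A n ξ, ∀ y ∈ trajSet a 1 q, ∀ i ∈ q.I, (y (i - 1))⁻¹ • ξ ∉ J) := by
  have : ContinuousConstSMul G S1 := ⟨hhomeo⟩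
  have hsupp_closed : IsClosed (homSupp a) := isClosed_closure
  have hJ : IsClosed J := by
    rwa [(subset_of_isClosedArc_minimal hsupp_closed hJmin).antisymm hJsupp]
  have hE : ¬ homSupp a ⊆ interior J :=
    not_subset_interior_of_isClosedArc_minimal hsupp_closed (hsupp_int.mono interior_subset)
      (hcompl_int.mono interior_subset) hJmin
  intro n hn
  filter_upwards [hgood n hn] with ξ hgood hξ
  replace hgood := hgood hξ
  refine ⟨fun q hq => (hgood q hq).1.satisfactory hJ hJsupp hE, ?_,
    fun q hq y hy i hi => (hgood q hq).1.inv_smul_pred_notMem hJsupp hy hi⟩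
  intro q₁ hq₁ q₂ hq₂ hne y₁ hy₁ y₂ hy₂
  refine Set.disjoint_left.mpr fun w hw₁ hw₂ => hne ?_
  rw [← eq_of_mem_cylOf hy₁ hy₂ hw₁ hw₂] at hy₂
  exact (hgood q₁ hq₁).eq_of_mem_trajSet hJsupp (hgood q₂ hq₂) hy₁ hy₂

/-- If the sets `A_{n,ξ}` consist of `ξ`-good collections, then conditions
(2), (3) and (5) of the conditional entropy criterion hold: each `T^{a,e}(q)` is satisfactory,
cylinders from distinct collections are disjoint, and `y_{i_r−1}⁻¹(ξ) ∉ J`. -/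
theorem xi_good_implies_entropy_conditions
    {G : Type} [Group G] [Countable G] [MulAction G S1]
    [MeasurableSpace G] [MeasurableSingletonClass G]
    (hhomeo : ActsByHomeos G) (hfaith : FaithfulAct G) (horient : ∀ g : G, OrientPres g)
    (hmin : MinimalAct G) (hprox : ProximalAct G)
    (μ : PMF G) (hnd : Nondeg μ) (hent : FiniteShannonEntropy μ)
    (ν : Measure S1) (hν : IsUniqueStationaryS1 μ ν)
    (a : G) (ha : a ≠ 1) (hsupp_int : (interior (homSupp a)).Nonempty)
    (hcompl_int : (interior ((homSupp a)ᶜ)).Nonempty)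
    (J : Set S1) (hJarc : IsClosedArc J) (hJsupp : homSupp a ⊆ J)
    (hJmin : ∀ J' : Set S1, IsClosedArc J' → homSupp a ⊆ J' → J ⊆ J')
    (p : ℝ) (hp : 0 < p)
    (Ξ : ℕ → Set S1) (hΞ : ∀ n : ℕ, 1 ≤ n → ENNReal.ofReal p ≤ ν (Ξ n))
    (A : (n : ℕ) → S1 → Set (Collection G μ.support n))
    (hgood : ∀ n : ℕ, 1 ≤ n → ∀ᵐ ξ ∂ν, ξ ∈ Ξ n → ∀ q ∈ A n ξ, IsXiGood a J ξ q) :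
    ∀ n : ℕ, 1 ≤ n → ∀ᵐ ξ ∂ν, ξ ∈ Ξ n →
      (∀ q ∈ A n ξ, Satisfactory a 1 q) ∧
      (∀ q₁ ∈ A n ξ, ∀ q₂ ∈ A n ξ, q₁ ≠ q₂ →
        ∀ y₁ ∈ trajSet a 1 q₁, ∀ y₂ ∈ trajSet a 1 q₂,
          Disjoint (cylOf n y₁) (cylOf n y₂)) ∧
      (∀ q ∈ A n ξ, ∀ y ∈ trajSet a 1 q, ∀ i ∈ q.I, (y (i - 1))⁻¹ • ξ ∉ J) :=
  xi_good_implies_entropy_conditions_general hhomeo μ ν a hsupp_int hcompl_int J hJsupp hJmin Ξ A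
    hgood
end
end

section
/- Let G ≤ Homeo₊(S¹) be countable with minimal, proximal and topologically nonfree action, and let μ be a nondegenerate probability measure on G with μ(e_G) > 0. Let ν, ν̄ be the unique μ- and μ̄-stationary measures on S¹. Suppose I ⊂ S¹ is a closed interval with ν(I) < 1/2, a ∈ supp(μ)∖{e_G} satisfies supp(a) ⊆ I with J the smallest closed interval containing supp(a), and c ∈ (0,1) is such that ν̄(J) < c/8 and 𝔼[Z^J_{n,1}] ≥ cn for all sufficiently large n. For n ≥ 1 let Wₙ count the times 1 ≤ k ≤ n such that w_k(J) dominates w_j(J) for all 0 ≤ j ≤ k−1, w_k⁻¹(ξ(w)) ∉ J, and the increment g_{k+1} ∈ {a, e_G}. Then there exists 0 < c′ < 1 such that 𝔼[Wₙ] ≥ c′ n for all sufficiently large n. -/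
open MeasureTheory Filter Topology Set

noncomputable section

/-!
At a time `k` counted by `Z^J_{n,1}`, the future of the walk, `v = w_k⁻¹ w_{k+·}`, is independent
of its past and distributed as the walk itself (Markov property), and `ξ(v) = w_k⁻¹ ξ(w)`.
Hence `k` is a useful time as soon as `v₁ = e` and `ξ(v) ∉ J`, an event of probability
`κ = μ(e) · ℙ(ξ ∉ J)`, so `𝔼[Wₙ] ≥ κ 𝔼[Z^J_{n,1}] ≥ κ c n`. Finally `ℙ(ξ ∉ J) > 0`: the set of
`g` with `ℙ(ξ ∉ g⁻¹ J) = 0` would be closed under right multiplication by `supp μ`, hence all of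
`G` by nondegeneracy, whereas by minimality the translates `g⁻¹ Jᶜ` of the complement of the
proper closed arc `J` cover the circle.
-/

section PathSpace

variable {G : Type*}

def pathCyl (k : ℕ) (y : ℕ → G) : Set (ℕ → G) := {w | ∀ j ≤ k, w j = y j}

def pathCyls (G : Type*) : Set (Set (ℕ → G)) := {s | ∃ k y, s = pathCyl k y}

def pathFiber (A : Set (ℕ → G)) (k : ℕ) (t : Fin (k + 1) → G) : Set (ℕ → G) :=
  A ∩ {w | ∀ j : Fin (k + 1), w j = t j}

lemma iUnion_pathFiber (A : Set (ℕ → G)) (k : ℕ) : ⋃ t, pathFiber A k t = A := by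
  ext w
  simp only [pathFiber, mem_iUnion, mem_inter_iff, mem_ofPred_eq]
  exact ⟨fun ⟨_, hw, _⟩ => hw, fun hw => ⟨fun j => w j, hw, fun _ => rfl⟩⟩

lemma pairwise_disjoint_pathFiber (A : Set (ℕ → G)) (k : ℕ) :
    Pairwise (Function.onFun Disjoint (pathFiber A k)) :=
  fun _ _ htt' => disjoint_left.2 fun _ hw hw' =>
    htt' (funext fun j => (hw.2 j).symm.trans (hw'.2 j))

lemma pathFiber_eq_empty_or_pathCyl {A : Set (ℕ → G)} {k : ℕ}
    (hA : DependsOn (· ∈ A) (Iic k)) (t : Fin (k + 1) → G) :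
    pathFiber A k t = ∅ ∨ ∃ y, pathFiber A k t = pathCyl k y := by
  rcases (pathFiber A k t).eq_empty_or_nonempty with h | ⟨y, hyA, hyt⟩
  · exact Or.inl h
  refine Or.inr ⟨y, Set.ext fun w => ⟨fun hw j hj => ?_, fun hw => ⟨?_, fun j => ?_⟩⟩⟩
  · rw [hw.2 ⟨j, Nat.lt_succ_of_le hj⟩, hyt ⟨j, Nat.lt_succ_of_le hj⟩]
  · exact (hA fun i hi => (hw i hi).symm).mp hyA
  · rw [hw j (Nat.le_of_lt_succ j.2), hyt j]

lemma isPiSystem_pathCyls : IsPiSystem (pathCyls G) := by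
  have key : ∀ (k m : ℕ) (y z : ℕ → G), k ≤ m → (pathCyl k y ∩ pathCyl m z).Nonempty →
      pathCyl k y ∩ pathCyl m z = pathCyl m z := by
    rintro k m y z hkm ⟨w, hwy, hwz⟩
    refine Subset.antisymm inter_subset_right fun v hv => ⟨fun j hj => ?_, hv⟩
    rw [hv j (hj.trans hkm), ← hwz j (hj.trans hkm), hwy j hj]
  rintro _ ⟨k, y, rfl⟩ _ ⟨m, z, rfl⟩ hne
  rcases le_total k m with h | h
  · exact ⟨m, z, key k m y z h hne⟩
  · rw [inter_comm] at hne ⊢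
    exact ⟨k, y, key m k z y h hne⟩

lemma measurableSet_pathCyl [MeasurableSpace G] [MeasurableSingletonClass G] (k : ℕ)
    (y : ℕ → G) : MeasurableSet (pathCyl k y) := by
  simp only [pathCyl, ofPred_forall]
  exact .iInter fun j => .iInter fun _ =>
    (measurableSet_singleton (y j)).preimage (measurable_pi_apply j)

lemma measurableSet_pathFiber {m : MeasurableSpace (ℕ → G)}
    (hcyl : ∀ k y, MeasurableSet[m] (pathCyl k y)) {A : Set (ℕ → G)} {k : ℕ}
    (hA : DependsOn (· ∈ A) (Iic k)) (t : Fin (k + 1) → G) :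
    MeasurableSet[m] (pathFiber A k t) := by
  rcases pathFiber_eq_empty_or_pathCyl hA t with h | ⟨y, h⟩ <;> rw [h]
  exacts [MeasurableSet.empty, hcyl k y]

variable [Countable G]

lemma measurableSet_of_dependsOn {m : MeasurableSpace (ℕ → G)}
    (hcyl : ∀ k y, MeasurableSet[m] (pathCyl k y)) {A : Set (ℕ → G)} {k : ℕ}
    (hA : DependsOn (· ∈ A) (Iic k)) : MeasurableSet[m] A :=
  iUnion_pathFiber A k ▸ .iUnion (measurableSet_pathFiber hcyl hA)

variable [MeasurableSpace G] [MeasurableSingletonClass G]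

lemma DependsOn.measurableSet {A : Set (ℕ → G)} {k : ℕ} (hA : DependsOn (· ∈ A) (Iic k)) :
    MeasurableSet A :=
  measurableSet_of_dependsOn measurableSet_pathCyl hA

lemma measurableSpace_pi_eq_generateFrom_pathCyls :
    (MeasurableSpace.pi : MeasurableSpace (ℕ → G)) = .generateFrom (pathCyls G) := by
  refine le_antisymm ?_ (MeasurableSpace.generateFrom_le ?_)
  · have hid : Measurable[.generateFrom (pathCyls G), MeasurableSpace.pi] id :=
      (@measurable_pi_iff _ _ _ (.generateFrom (pathCyls G)) _ id).2 fun i =>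
        @measurable_to_countable' _ _ _ _ (.generateFrom (pathCyls G)) _ fun g =>
          measurableSet_of_dependsOn
            (fun k y => MeasurableSpace.measurableSet_generateFrom (s := pathCyls G) ⟨k, y, rfl⟩)
            (k := i) fun w w' h => by
              simp only [mem_preimage, mem_singleton_iff, id, h i self_mem_Iic]
    exact fun s hs => hid hs
  · rintro _ ⟨k, y, rfl⟩
    exact measurableSet_pathCyl k y

end PathSpace

section Shift

variable {G : Type*} [Group G]

def pathShift (k : ℕ) (w : ℕ → G) : ℕ → G := fun m => (w k)⁻¹ * w (k + m)

@[simp]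
lemma pathShift_zero (k : ℕ) (w : ℕ → G) : pathShift k w 0 = 1 := by
  simp [pathShift]

lemma measurable_pathShift [Countable G] [MeasurableSpace G] [MeasurableSingletonClass G]
    (k : ℕ) : Measurable (pathShift (G := G) k) :=
  measurable_pi_lambda _ fun m => measurable_to_countable' fun g =>
    DependsOn.measurableSet (k := k + m) fun w w' h => by
      simp only [mem_preimage, mem_singleton_iff, pathShift,
        h k (mem_Iic.2 (Nat.le_add_right k m)), h (k + m) self_mem_Iic]

def pathConcat (k : ℕ) (y z : ℕ → G) : ℕ → G := fun j => if j ≤ k then y j else y k * z (j - k)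

lemma pathCyl_inter_preimage_pathShift (k m : ℕ) (y z : ℕ → G) (hz : z 0 = 1) :
    pathCyl k y ∩ pathShift k ⁻¹' pathCyl m z = pathCyl (k + m) (pathConcat k y z) := by
  ext w
  simp only [mem_inter_iff, mem_preimage, pathCyl, pathShift, pathConcat, mem_ofPred_eq]
  constructor
  · rintro ⟨hy, hz'⟩ j hj
    split_ifs with hjk
    · exact hy j hjk
    · have := hz' (j - k) (by omega)
      rw [Nat.add_sub_cancel' (by omega), inv_mul_eq_iff_eq_mul] at this
      rw [this, hy k le_rfl]
  · intro h
    have hk : w k = y k := by simpa using h k (by omega)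
    refine ⟨fun j hj => by simpa [hj] using h j (by omega), fun j hj => ?_⟩
    rcases Nat.eq_zero_or_pos j with rfl | hj0
    · simp [hz]
    · have := h (k + j) (by omega)
      rw [if_neg (by omega), Nat.add_sub_cancel_left] at this
      rw [this, hk, inv_mul_cancel_left]

lemma prod_increments_pathConcat {M : Type*} [CommMonoid M] (f : G → M) (k m : ℕ)
    (y z : ℕ → G) (hz : z 0 = 1) :
    ∏ i ∈ Finset.range (k + m), f ((pathConcat k y z i)⁻¹ * pathConcat k y z (i + 1)) =
      (∏ i ∈ Finset.range k, f ((y i)⁻¹ * y (i + 1))) *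
        ∏ i ∈ Finset.range m, f ((z i)⁻¹ * z (i + 1)) := by
  rw [Finset.prod_range_add]
  congr 1
  · refine Finset.prod_congr rfl fun i hi => ?_
    have := Finset.mem_range.1 hi
    simp only [pathConcat, if_pos this.le, if_pos (Nat.succ_le_of_lt this)]
  · refine Finset.prod_congr rfl fun i _ => ?_
    have hi : pathConcat k y z (k + i) = y k * z i := by
      rcases Nat.eq_zero_or_pos i with rfl | hi0
      · simp [pathConcat, hz]
      · simp only [pathConcat, if_neg (by omega : ¬ k + i ≤ k), Nat.add_sub_cancel_left]
    have hi' : pathConcat k y z (k + i + 1) = y k * z (i + 1) := by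
      simp only [pathConcat]
      rw [if_neg (by omega), show k + i + 1 - k = i + 1 by omega]
    rw [hi, hi', mul_inv_rev, mul_assoc, inv_mul_cancel_left]

end Shift

namespace IsRWMeasure

variable {G : Type*} [Group G] [MeasurableSpace G] {μ : PMF G} {P : Measure (ℕ → G)}

lemma measure_pathCyl (hP : IsRWMeasure μ P) (n : ℕ) {y : ℕ → G} (hy : y 0 = 1) :
    P (pathCyl n y) = ∏ k ∈ Finset.range n, μ ((y k)⁻¹ * y (k + 1)) :=
  hP.2 n y hy

variable [MeasurableSingletonClass G]

lemma ae_eq_one_zero (hP : IsRWMeasure μ P) : ∀ᵐ w ∂P, w 0 = 1 := by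
  have := hP.1
  have hcyl : P (pathCyl 0 1) = 1 := by simp [hP.measure_pathCyl 0 (y := 1) rfl]
  have : pathCyl 0 1 ∈ ae P :=
    mem_ae_iff.2 ((prob_compl_eq_zero_iff (measurableSet_pathCyl 0 1)).2 hcyl)
  filter_upwards [this] with w hw using hw 0 le_rfl

lemma measure_pathCyl_of_ne_one (hP : IsRWMeasure μ P) (k : ℕ) {y : ℕ → G} (hy : y 0 ≠ 1) :
    P (pathCyl k y) = 0 :=
  measure_eq_zero_iff_ae_notMem.2 <| hP.ae_eq_one_zero.mono fun _ hw hcyl =>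
    hy (by rw [← hcyl 0 (Nat.zero_le k), hw])

lemma measure_coord_one (hP : IsRWMeasure μ P) (g : G) : P {w | w 1 = g} = μ g := by
  classical
  have hcyl : {w : ℕ → G | w 1 = g} =ᵐ[P] pathCyl 1 (Pi.mulSingle 1 g) := by
    filter_upwards [hP.ae_eq_one_zero] with w hw
    refine propext ⟨fun (h : w 1 = g) j hj => ?_,
      fun h => (by simpa using h 1 le_rfl : w 1 = g)⟩
    interval_cases j <;> simp [hw, h]
  rw [measure_congr hcyl, hP.measure_pathCyl _ (by simp)]
  simp

lemma measure_pathCyl_inter_preimage_pathShift_pathCyl (hP : IsRWMeasure μ P) (k m : ℕ)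
    (y z : ℕ → G) :
    P (pathCyl k y ∩ pathShift k ⁻¹' pathCyl m z) = P (pathCyl k y) * P (pathCyl m z) := by
  by_cases hy : y 0 = 1
  swap
  · rw [hP.measure_pathCyl_of_ne_one k hy, zero_mul]
    exact measure_mono_null inter_subset_left (hP.measure_pathCyl_of_ne_one k hy)
  by_cases hz : z 0 = 1
  swap
  · rw [hP.measure_pathCyl_of_ne_one m hz, mul_zero]
    refine measure_mono_null (fun w hw => hz ?_) measure_empty
    simpa using (hw.2 0 (Nat.zero_le m)).symm
  have hyz : pathConcat k y z 0 = 1 := by simp [pathConcat, hy]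
  rw [pathCyl_inter_preimage_pathShift k m y z hz, hP.measure_pathCyl _ hyz,
    hP.measure_pathCyl _ hy, hP.measure_pathCyl _ hz,
    prod_increments_pathConcat _ k m y z hz]

variable [Countable G]

lemma measure_pathCyl_inter_preimage_pathShift (hP : IsRWMeasure μ P) (k : ℕ) (y : ℕ → G)
    {D : Set (ℕ → G)} (hD : MeasurableSet D) :
    P (pathCyl k y ∩ pathShift k ⁻¹' D) = P (pathCyl k y) * P D := by
  have := hP.1
  have hmap : ∀ {D}, MeasurableSet D →
      (P.restrict (pathCyl k y)).map (pathShift k) D = P (pathCyl k y ∩ pathShift k ⁻¹' D) :=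
    fun hD => by
      rw [Measure.map_apply (measurable_pathShift k) hD,
        Measure.restrict_apply (measurable_pathShift k hD), inter_comm]
  have hext : (P.restrict (pathCyl k y)).map (pathShift k) = P (pathCyl k y) • P := by
    refine ext_of_generate_finite _ measurableSpace_pi_eq_generateFrom_pathCyls
      isPiSystem_pathCyls ?_ ?_
    · rintro _ ⟨m, z, rfl⟩
      rw [hmap (measurableSet_pathCyl m z), Measure.smul_apply, smul_eq_mul,
        hP.measure_pathCyl_inter_preimage_pathShift_pathCyl]
    · simp [hmap MeasurableSet.univ]
  rw [← hmap hD, hext, Measure.smul_apply, smul_eq_mul]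

/-- The Markov property of the random walk at time `k`. -/
lemma measure_inter_preimage_pathShift (hP : IsRWMeasure μ P) {k : ℕ} {A : Set (ℕ → G)}
    (hA : DependsOn (· ∈ A) (Iic k)) {D : Set (ℕ → G)} (hD : MeasurableSet D) :
    P (A ∩ pathShift k ⁻¹' D) = P A * P D := by
  have hmeas := measurableSet_pathFiber measurableSet_pathCyl hA
  have hfiber : ∀ t, P (pathFiber A k t ∩ pathShift k ⁻¹' D) = P (pathFiber A k t) * P D :=
    fun t => by
      rcases pathFiber_eq_empty_or_pathCyl hA t with h | ⟨y, h⟩ <;> rw [h]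
      · simp
      · exact hP.measure_pathCyl_inter_preimage_pathShift k y hD
  have hdisj := pairwise_disjoint_pathFiber A k
  conv_lhs => rw [← iUnion_pathFiber A k, iUnion_inter]
  rw [measure_iUnion (fun t t' h => (hdisj h).mono inter_subset_left inter_subset_left)
      fun t => (hmeas t).inter (measurable_pathShift k hD)]
  simp_rw [hfiber, ENNReal.tsum_mul_right, ← measure_iUnion hdisj hmeas, iUnion_pathFiber]

lemma map_pathShift (hP : IsRWMeasure μ P) (k : ℕ) : P.map (pathShift k) = P := by
  have := hP.1
  ext s hs
  rw [Measure.map_apply (measurable_pathShift k) hs]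
  simpa using hP.measure_inter_preimage_pathShift (A := univ) (k := k) (fun _ _ _ => rfl) hs

lemma ae_pathShift (hP : IsRWMeasure μ P) (k : ℕ) {p : (ℕ → G) → Prop} (h : ∀ᵐ w ∂P, p w) :
    ∀ᵐ w ∂P, p (pathShift k w) :=
  ae_of_ae_map (measurable_pathShift k).aemeasurable (by rwa [hP.map_pathShift k])

end IsRWMeasure

lemma IsClosedArc.isClosed {J : Set S1} (hJ : IsClosedArc J) : IsClosed J := by
  obtain ⟨α, β, -, -, rfl⟩ := hJ
  have hc : Continuous toS1 := continuous_quotient_mk'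
  exact (isCompact_Icc.image hc).isClosed

section Boundary

variable {G : Type*} [Group G] [MulAction G S1]

lemma MinimalAct.exists_smul_notMem (hmin : MinimalAct G) {J : Set S1} (hJ : IsClosed J)
    (hJne : J ≠ univ) (x : S1) : ∃ g : G, g • x ∉ J := by
  by_contra! h
  have : closure (MulAction.orbit G x) ⊆ J :=
    hJ.closure_subset_iff.2 (by rintro _ ⟨g, rfl⟩; exact h g)
  exact hJne (univ_subset_iff.1 ((hmin x).closure_eq ▸ this))

lemma WeakStarToDirac.unique {ν : Measure S1} {w : ℕ → G} {z z' : S1}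
    (h : WeakStarToDirac ν w z) (h' : WeakStarToDirac ν w z') : z = z' := by
  let f : C(S1, ℝ) := ⟨fun x => dist x z, continuous_id.dist continuous_const⟩
  have : dist z z = dist z' z := tendsto_nhds_unique (h f) (h' f)
  exact (dist_eq_zero.1 (this.symm.trans (dist_self z))).symm

lemma WeakStarToDirac.pathShift {ν : Measure S1} {w : ℕ → G} {z : S1} (k : ℕ)
    (hcont : Continuous fun x : S1 => (w k)⁻¹ • x) (h : WeakStarToDirac ν w z) :
    WeakStarToDirac ν (pathShift k w) ((w k)⁻¹ • z) := by
  intro f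
  have := (h (f.comp ⟨_, hcont⟩)).comp (tendsto_add_atTop_nat k)
  simpa [Function.comp_def, _root_.pathShift, mul_smul, add_comm k] using this

variable [Countable G] [MeasurableSpace G] [MeasurableSingletonClass G]
  {μ : PMF G} {P : Measure (ℕ → G)} {ν : Measure S1} {bnd : (ℕ → G) → S1}

lemma IsRWMeasure.ae_bnd_pathShift (hP : IsRWMeasure μ P) (hhomeo : ActsByHomeos G)
    (hconv : ∀ᵐ w ∂P, WeakStarToDirac ν w (bnd w)) (k : ℕ) :
    ∀ᵐ w ∂P, bnd (pathShift k w) = (w k)⁻¹ • bnd w := by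
  filter_upwards [hconv, hP.ae_pathShift k hconv] with w h h'
  exact h'.unique (h.pathShift k (hhomeo _))

lemma IsRWMeasure.measure_coord_one_inter_bnd_preimage (hP : IsRWMeasure μ P)
    (hhomeo : ActsByHomeos G) (hbnd : Measurable bnd)
    (hconv : ∀ᵐ w ∂P, WeakStarToDirac ν w (bnd w)) (g : G) {S : Set S1}
    (hS : MeasurableSet S) :
    P ({w | w 1 = g} ∩ bnd ⁻¹' S) = μ g * P (bnd ⁻¹' ((g • ·) ⁻¹' S)) := by
  have hae : ({w | w 1 = g} ∩ bnd ⁻¹' S : Set (ℕ → G))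
      =ᵐ[P] ({w | w 1 = g} ∩ pathShift 1 ⁻¹' (bnd ⁻¹' ((g • ·) ⁻¹' S)) : Set (ℕ → G)) := by
    filter_upwards [hP.ae_bnd_pathShift hhomeo hconv 1] with w hw
    refine propext (and_congr_right fun (h1 : w 1 = g) => ?_)
    simp only [mem_preimage, hw, h1, smul_inv_smul]
  rw [measure_congr hae, hP.measure_inter_preimage_pathShift (k := 1)
    (fun w w' h => by simp only [mem_ofPred_eq, h 1 self_mem_Iic])
    (hbnd ((hhomeo g).measurable hS)), hP.measure_coord_one]

lemma IsRWMeasure.measure_bnd_preimage_smul_eq_zero (hP : IsRWMeasure μ P)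
    (hhomeo : ActsByHomeos G) (hbnd : Measurable bnd)
    (hconv : ∀ᵐ w ∂P, WeakStarToDirac ν w (bnd w)) (hnd : Nondeg μ) {S : Set S1}
    (hS : MeasurableSet S) (h0 : P (bnd ⁻¹' S) = 0) (g : G) :
    P (bnd ⁻¹' ((g • ·) ⁻¹' S)) = 0 := by
  let IsNull : G → Prop := fun h => P (bnd ⁻¹' ((h • ·) ⁻¹' S)) = 0
  have hstep : ∀ h x, x ∈ μ.support → IsNull h → IsNull (h * x) := by
    intro h x hx hh
    have hle : P ({w | w 1 = x} ∩ bnd ⁻¹' ((h • ·) ⁻¹' S)) ≤ P (bnd ⁻¹' ((h • ·) ⁻¹' S)) :=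
      measure_mono inter_subset_right
    rw [hP.measure_coord_one_inter_bnd_preimage hhomeo hbnd hconv x
      ((hhomeo h).measurable hS), hh, nonpos_iff_eq_zero] at hle
    simpa [IsNull, mul_smul, preimage_preimage, (PMF.mem_support_iff μ x).1 hx] using hle
  have hclosure : ∀ x ∈ Subsemigroup.closure μ.support, ∀ h, IsNull h → IsNull (h * x) :=
    fun x hx => Subsemigroup.closure_induction (fun x hx h => hstep h x hx)
      (fun x y _ _ hx hy h hh => mul_assoc h x y ▸ hy _ (hx h hh)) hx
  simpa [IsNull] using hclosure g (hnd ▸ Subsemigroup.mem_top g) 1 (by simpa [IsNull] using h0)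

lemma IsRWMeasure.measure_bnd_preimage_compl_ne_zero (hP : IsRWMeasure μ P)
    (hhomeo : ActsByHomeos G) (hbnd : Measurable bnd)
    (hconv : ∀ᵐ w ∂P, WeakStarToDirac ν w (bnd w)) (hmin : MinimalAct G) (hnd : Nondeg μ)
    {J : Set S1} (hJ : IsClosed J) (hJne : J ≠ univ) :
    P (bnd ⁻¹' Jᶜ) ≠ 0 := by
  have := hP.1
  intro h0
  have hcover : ⋃ g : G, bnd ⁻¹' ((g • ·) ⁻¹' Jᶜ) = univ :=
    eq_univ_of_forall fun w => mem_iUnion.2 (hmin.exists_smul_notMem hJ hJne (bnd w))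
  have := measure_iUnion_null
    (hP.measure_bnd_preimage_smul_eq_zero hhomeo hbnd hconv hnd hJ.measurableSet.compl h0)
  rw [hcover, measure_univ] at this
  exact one_ne_zero this

end Boundary

lemma natCard_mem_eq_sum_indicator {Ω : Type*} (A : ℕ → Set Ω) (n : ℕ) (ω : Ω) :
    (Nat.card {k // 1 ≤ k ∧ k ≤ n ∧ ω ∈ A k} : ℝ) = ∑ k ∈ Finset.Icc 1 n, (A k).indicator 1 ω := by
  classical
  have e : {k // 1 ≤ k ∧ k ≤ n ∧ ω ∈ A k} ≃ {k // k ∈ (Finset.Icc 1 n).filter (ω ∈ A ·)} :=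
    Equiv.subtypeEquivRight fun k => by simp [and_assoc]
  rw [Nat.card_congr e, Nat.card_eq_fintype_card, Fintype.card_coe, Finset.card_filter]
  push_cast
  simp [Set.indicator_apply]

lemma integral_natCard_mem {Ω : Type*} [MeasurableSpace Ω] (P : Measure Ω) [IsFiniteMeasure P]
    {A : ℕ → Set Ω} (hA : ∀ k, MeasurableSet (A k)) (n : ℕ) :
    ∫ ω, (Nat.card {k // 1 ≤ k ∧ k ≤ n ∧ ω ∈ A k} : ℝ) ∂P = ∑ k ∈ Finset.Icc 1 n, P.real (A k) := by
  simp_rw [natCard_mem_eq_sum_indicator]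
  rw [integral_finsetSum _ fun k _ => (integrable_const 1).indicator (hA k)]
  exact Finset.sum_congr rfl fun k _ => integral_indicator_one (hA k)

section UsefulTimes

variable {G : Type*} [Group G] [MulAction G S1]

def dominatingSet (J : Set S1) (k : ℕ) : Set (ℕ → G) :=
  {w | ∀ j < k, Dominates ((fun z : S1 => w k • z) '' J) ((fun z : S1 => w j • z) '' J)}

def usefulSet (J : Set S1) (a : G) (bnd : (ℕ → G) → S1) (k : ℕ) : Set (ℕ → G) :=
  dominatingSet J k ∩
    {w | (w k)⁻¹ • bnd w ∉ J ∧ ((w k)⁻¹ * w (k + 1) = a ∨ (w k)⁻¹ * w (k + 1) = 1)}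

lemma Zvar_one_eq (J : Set S1) (n : ℕ) (w : ℕ → G) :
    Zvar J n 1 w = Nat.card {k // 1 ≤ k ∧ k ≤ n ∧ w ∈ dominatingSet J k} := by
  simp only [Zvar, Nat.cast_one, div_one, Nat.ceil_natCast, mul_one]
  rfl

lemma Wvar_eq (J : Set S1) (a : G) (bnd : (ℕ → G) → S1) (n : ℕ) (w : ℕ → G) :
    Wvar J a bnd n w = Nat.card {k // 1 ≤ k ∧ k ≤ n ∧ w ∈ usefulSet J a bnd k} :=
  rfl

lemma dependsOn_dominatingSet (J : Set S1) (k : ℕ) :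
    DependsOn (· ∈ dominatingSet (G := G) J k) (Iic k) := by
  intro w w' h
  refine propext (forall₂_congr fun j hj => ?_)
  rw [h k self_mem_Iic, h j (mem_Iic.2 hj.le)]

variable [Countable G] [MeasurableSpace G] [MeasurableSingletonClass G]
  {μ : PMF G} {P : Measure (ℕ → G)} {ν : Measure S1} {bnd : (ℕ → G) → S1} {J : Set S1}

lemma measurableSet_usefulSet (hhomeo : ActsByHomeos G) (hbnd : Measurable bnd)
    (hJ : MeasurableSet J) (a : G) (k : ℕ) : MeasurableSet (usefulSet J a bnd k) := by
  have hsmul : Measurable fun w : ℕ → G => (w k)⁻¹ • bnd w :=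
    (measurable_from_prod_countable_left (f := fun p : S1 × G => p.2⁻¹ • p.1)
      fun g => (hhomeo g⁻¹).measurable).comp (hbnd.prodMk (measurable_pi_apply k))
  have hincr : DependsOn (· ∈ {w : ℕ → G | (w k)⁻¹ * w (k + 1) = a ∨ (w k)⁻¹ * w (k + 1) = 1})
      (Iic (k + 1)) := fun w w' h => by
    simp only [mem_ofPred_eq, h k (mem_Iic.2 k.le_succ), h (k + 1) self_mem_Iic]
  exact (dependsOn_dominatingSet J k).measurableSet.inter
    ((hsmul hJ.compl).inter hincr.measurableSet)

lemma IsRWMeasure.measure_dominatingSet_mul_le (hP : IsRWMeasure μ P) (hhomeo : ActsByHomeos G)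
    (hbnd : Measurable bnd) (hconv : ∀ᵐ w ∂P, WeakStarToDirac ν w (bnd w))
    (hJ : MeasurableSet J) (a : G) (k : ℕ) :
    P (dominatingSet J k) * P {v | v 1 = 1 ∧ bnd v ∉ J} ≤ P (usefulSet J a bnd k) := by
  have hD : MeasurableSet {v : ℕ → G | v 1 = 1 ∧ bnd v ∉ J} :=
    ((measurableSet_singleton 1).preimage (measurable_pi_apply 1)).inter (hbnd hJ.compl)
  rw [← hP.measure_inter_preimage_pathShift (dependsOn_dominatingSet J k) hD]
  refine measure_mono_ae ?_
  filter_upwards [hP.ae_bnd_pathShift hhomeo hconv k] with w hw ⟨hdom, h1, hout⟩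
  exact ⟨hdom, hw ▸ hout, Or.inr h1⟩

lemma IsRWMeasure.measureReal_mul_integral_Zvar_le (hP : IsRWMeasure μ P)
    (hhomeo : ActsByHomeos G) (hbnd : Measurable bnd)
    (hconv : ∀ᵐ w ∂P, WeakStarToDirac ν w (bnd w)) (hJ : MeasurableSet J) (a : G) (n : ℕ) :
    P.real {v | v 1 = 1 ∧ bnd v ∉ J} * ∫ w, (Zvar J n 1 w : ℝ) ∂P ≤
      ∫ w, (Wvar J a bnd n w : ℝ) ∂P := by
  have := hP.1
  simp_rw [Zvar_one_eq, Wvar_eq]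
  rw [integral_natCard_mem P (fun k => (dependsOn_dominatingSet J k).measurableSet),
    integral_natCard_mem P (measurableSet_usefulSet hhomeo hbnd hJ a), Finset.mul_sum]
  refine Finset.sum_le_sum fun k _ => ?_
  rw [mul_comm, measureReal_def, measureReal_def, measureReal_def, ← ENNReal.toReal_mul]
  exact ENNReal.toReal_mono (measure_ne_top _ _)
    (hP.measure_dominatingSet_mul_le hhomeo hbnd hconv hJ a k)

lemma IsRWMeasure.measureReal_coord_one_bnd_notMem_pos (hP : IsRWMeasure μ P) (hhomeo : ActsByHomeos G)
    (hbnd : Measurable bnd) (hconv : ∀ᵐ w ∂P, WeakStarToDirac ν w (bnd w))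
    (hmin : MinimalAct G) (hnd : Nondeg μ) (hlazy : 0 < μ 1) (hJ : IsClosed J)
    (hJne : J ≠ univ) : 0 < P.real {v | v 1 = 1 ∧ bnd v ∉ J} := by
  have := hP.1
  have h := hP.measure_coord_one_inter_bnd_preimage hhomeo hbnd hconv 1 hJ.measurableSet.compl
  simp only [one_smul, preimage_id'] at h
  refine ENNReal.toReal_pos ?_ (measure_ne_top _ _)
  rw [show {v : ℕ → G | v 1 = 1 ∧ bnd v ∉ J} = {w | w 1 = 1} ∩ bnd ⁻¹' Jᶜ from rfl, h]
  exact mul_ne_zero hlazy.ne'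
    (hP.measure_bnd_preimage_compl_ne_zero hhomeo hbnd hconv hmin hnd hJ hJne)

end UsefulTimes

theorem linearly_many_useful_times_general
    {G : Type} [Group G] [Countable G] [MulAction G S1]
    [MeasurableSpace G] [MeasurableSingletonClass G]
    (hhomeo : ActsByHomeos G)
    (hmin : MinimalAct G)
    (μ : PMF G) (hnd : Nondeg μ) (hlazy : 0 < μ 1)
    (ν : Measure S1) (hν : IsUniqueStationaryS1 μ ν)
    (I : Set S1) (hI : IsClosedArc I) (hνI : ν I < 1 / 2)
    (a : G) (haI : homSupp a ⊆ I)
    (J : Set S1) (hJarc : IsClosedArc J)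
    (hJmin : ∀ J' : Set S1, IsClosedArc J' → homSupp a ⊆ J' → J ⊆ J')
    (c : ℝ) (hc0 : 0 < c) (hc1 : c < 1)
    (P : Measure (ℕ → G)) (hP : IsRWMeasure μ P)
    (bnd : (ℕ → G) → S1) (hbnd : Measurable bnd)
    (hconv : ∀ᵐ w ∂P, WeakStarToDirac ν w (bnd w))
    (hZ : ∃ N₀ : ℕ, ∀ n ≥ N₀, c * n ≤ ∫ w, (Zvar J n 1 w : ℝ) ∂P) :
    ∃ c' : ℝ, 0 < c' ∧ c' < 1 ∧ ∃ N : ℕ, ∀ n ≥ N,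
      c' * n ≤ ∫ w, (Wvar J a bnd n w : ℝ) ∂P := by
  obtain ⟨N₀, hZ⟩ := hZ
  have := hP.1
  have := hν.1
  have hJ : IsClosed J := hJarc.isClosed
  have hJne : J ≠ univ := by
    rintro rfl
    rw [univ_subset_iff.1 (hJmin I hI haI), measure_univ] at hνI
    norm_num at hνI
  set κ := P.real {v : ℕ → G | v 1 = 1 ∧ bnd v ∉ J}
  have hκ : 0 < κ := hP.measureReal_coord_one_bnd_notMem_pos hhomeo hbnd hconv hmin hnd hlazy hJ hJne
  refine ⟨c * κ, by positivity, ?_, N₀, fun n hn => ?_⟩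
  · calc c * κ ≤ c := mul_le_of_le_one_right hc0.le measureReal_le_one
      _ < 1 := hc1
  · calc c * κ * n = κ * (c * n) := by ring
      _ ≤ κ * ∫ w, (Zvar J n 1 w : ℝ) ∂P := by gcongr; exact hZ n hn
      _ ≤ _ := hP.measureReal_mul_integral_Zvar_le hhomeo hbnd hconv hJ.measurableSet a n

/-- (Linearly many useful times.) Under the listed hypotheses, the random
variable `Wₙ` counting the times `1 ≤ k ≤ n` at which `w_k(J)` dominates all earlier translates,
`w_k⁻¹(ξ(w)) ∉ J`, and the increment `g_{k+1} ∈ {a, e}`, has expectation at least `c' n` for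
some `0 < c' < 1` and all sufficiently large `n`. -/
theorem linearly_many_useful_times
    {G : Type} [Group G] [Countable G] [MulAction G S1]
    [MeasurableSpace G] [MeasurableSingletonClass G]
    (hhomeo : ActsByHomeos G) (hfaith : FaithfulAct G) (horient : ∀ g : G, OrientPres g)
    (hmin : MinimalAct G) (hprox : ProximalAct G) (hnonfree : TopNonfree G)
    (μ : PMF G) (hnd : Nondeg μ) (hlazy : 0 < μ 1)
    (ν : Measure S1) (hν : IsUniqueStationaryS1 μ ν)
    (νbar : Measure S1) (hνbar : IsUniqueStationaryS1 (μ.map fun g => g⁻¹) νbar)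
    (I : Set S1) (hI : IsClosedArc I) (hνI : ν I < 1 / 2)
    (a : G) (haSupp : a ∈ μ.support) (ha1 : a ≠ 1) (haI : homSupp a ⊆ I)
    (J : Set S1) (hJarc : IsClosedArc J) (hJsupp : homSupp a ⊆ J)
    (hJmin : ∀ J' : Set S1, IsClosedArc J' → homSupp a ⊆ J' → J ⊆ J')
    (c : ℝ) (hc0 : 0 < c) (hc1 : c < 1) (hνbarJ : νbar J < ENNReal.ofReal (c / 8))
    (P : Measure (ℕ → G)) (hP : IsRWMeasure μ P)
    (bnd : (ℕ → G) → S1) (hbnd : Measurable bnd)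
    (hconv : ∀ᵐ w ∂P, WeakStarToDirac ν w (bnd w))
    (hZ : ∃ N₀ : ℕ, ∀ n ≥ N₀, c * n ≤ ∫ w, (Zvar J n 1 w : ℝ) ∂P) :
    ∃ c' : ℝ, 0 < c' ∧ c' < 1 ∧ ∃ N : ℕ, ∀ n ≥ N,
      c' * n ≤ ∫ w, (Wvar J a bnd n w : ℝ) ∂P :=
  linearly_many_useful_times_general hhomeo hmin μ hnd hlazy ν hν I hI hνI a haI J hJarc hJmin c hc0
    hc1 P hP bnd hbnd hconv hZ
end
end
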